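/- Let C be a symmetric monoidal closed category with all small limits and colimits and terminal object t, and let a, b, c be pointed objects of C. Then there is an isomorphism hom_*(a, hom_*(b, c)) ≅ hom_*(a ∧ b, c) in C, natural in a, b, and c, and compatible with the basepoint morphisms from t. -/

import Mathlib

set_option linter.unusedSectionVars false
open CategoryTheory CategoryTheory.Limits CategoryTheory.MonoidalCategory
  CategoryTheory.MonoidalClosed

universe v u

namespace BasedObjects

variable {C : Type u} [Category.{v} C] [MonoidalCategory C] [SymmetricCategory C]
  [MonoidalClosed C] [HasLimits C] [HasColimits C]

/-- The object `(a ⊗ t) ⨿ (t ⊗ b)` appearing in the definition of the smash product of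
pointed objects `a` and `b`. -/
noncomputable def wedgeObj (a b : Under (⊤_ C)) : C :=
  (a.right ⊗ (⊤_ C : C)) ⨿ ((⊤_ C : C) ⊗ b.right)

/-- The canonical morphism `(a ⊗ t) ⨿ (t ⊗ b) ⟶ a ⊗ b` with components `id_a ⊗ pt_b` and
`pt_a ⊗ id_b`. -/
noncomputable def wedgeMap (a b : Under (⊤_ C)) : wedgeObj a b ⟶ a.right ⊗ b.right :=
  coprod.desc (a.right ◁ b.hom) (a.hom ▷ b.right)

/-- The smash product of pointed objects: the pushout of
`t ⟵ (a ⊗ t) ⨿ (t ⊗ b) ⟶ a ⊗ b`, pointed by the coprojection from `t`. -/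
noncomputable def smash (a b : Under (⊤_ C)) : Under (⊤_ C) :=
  Under.mk (pushout.inr (wedgeMap a b) (terminal.from (wedgeObj a b)))

/-- Functoriality of the smash product of pointed objects. -/
noncomputable def smashMap {a a' b b' : Under (⊤_ C)} (f : a ⟶ a') (g : b ⟶ b') :
    smash a b ⟶ smash a' b' :=
  Under.homMk
    (pushout.map (wedgeMap a b) (terminal.from (wedgeObj a b))
      (wedgeMap a' b') (terminal.from (wedgeObj a' b'))
      (f.right ⊗ₘ g.right) (𝟙 (⊤_ C))
      (coprod.map (f.right ▷ (⊤_ C : C)) ((⊤_ C : C) ◁ g.right))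
      (by
        dsimp [wedgeMap, wedgeObj]
        apply coprod.hom_ext
        · rw [coprod.inl_desc_assoc, coprod.map_desc, coprod.inl_desc,
            MonoidalCategory.tensorHom_def, whisker_exchange_assoc, ← MonoidalCategory.whiskerLeft_comp,
            Under.w g]
        · rw [coprod.inr_desc_assoc, coprod.map_desc, coprod.inr_desc,
            MonoidalCategory.tensorHom_def', ← whisker_exchange_assoc, ← comp_whiskerRight,
            Under.w f])
      (Subsingleton.elim _ _))
    (by dsimp [smash]; erw [pushout.inr_desc]; exact Category.id_comp _)

/-- Any two morphisms into an internal hom object of the form `[A, t]`, with `t` terminal,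
agree. -/
theorem hom_to_ihom_terminal_ext {A X : C} (f g : X ⟶ (ihom A).obj (⊤_ C : C)) : f = g :=
  uncurry_injective (Subsingleton.elim _ _)

/-- The canonical isomorphism `t ≅ [A, t]`, witnessing that the internal hom out of `A`
preserves the terminal object. -/
noncomputable def ihomTermIso (A : C) : (⊤_ C : C) ≅ (ihom A).obj (⊤_ C : C) where
  hom := curry (terminal.from _)
  inv := terminal.from _
  hom_inv_id := Subsingleton.elim _ _
  inv_hom_id := hom_to_ihom_terminal_ext _ _

/-- The morphism `t ⟶ [A, b]` adjoint to the composite `A ⊗ t ⟶ t ⟶ b` of the canonical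
morphism to the terminal object followed by the basepoint of `b`. -/
noncomputable def pointLeg (A : C) (b : Under (⊤_ C)) :
    (⊤_ C : C) ⟶ (ihom A).obj b.right :=
  curry (terminal.from (A ⊗ (⊤_ C : C)) ≫ b.hom)

/-- The composite `t ≅ [a, t] ⟶ [a, b]`, the first component of the basepoint of the based
hom object. -/
noncomputable def basedHomPointFst (a b : Under (⊤_ C)) :
    (⊤_ C : C) ⟶ (ihom a.right).obj b.right :=
  (ihomTermIso a.right).hom ≫ (ihom a.right).map b.hom

theorem basedHomPoint_w (a b : Under (⊤_ C)) :
    basedHomPointFst a b ≫ (pre a.hom).app b.right = 𝟙 (⊤_ C : C) ≫ pointLeg (⊤_ C : C) b := by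
  rw [Category.id_comp]
  dsimp [basedHomPointFst, pointLeg, ihomTermIso]
  rw [Category.assoc, ← pre_comm_ihom_map, curry_natural_right, ← Category.assoc]
  congr 1
  apply uncurry_injective
  exact Subsingleton.elim _ _

/-- The based hom object `hom_*(a, b)`: the pullback of `[a, b] ⟶ [t, b] ⟵ t`, pointed by
the induced morphism from `t`. -/
noncomputable def basedHom (a b : Under (⊤_ C)) : Under (⊤_ C) :=
  Under.mk (pullback.lift (basedHomPointFst a b) (𝟙 (⊤_ C : C)) (basedHomPoint_w a b))

theorem basedHomPointFst_map (a : Under (⊤_ C)) {x x' : Under (⊤_ C)} (g : x ⟶ x') :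
    basedHomPointFst a x ≫ (ihom a.right).map g.right = basedHomPointFst a x' := by
  dsimp [basedHomPointFst]
  rw [Category.assoc, ← Functor.map_comp, Under.w g]

theorem basedHomPointFst_pre {a a' : Under (⊤_ C)} (f : a ⟶ a') (x : Under (⊤_ C)) :
    basedHomPointFst a' x ≫ (pre f.right).app x.right = basedHomPointFst a x := by
  dsimp [basedHomPointFst]
  rw [Category.assoc, ← pre_comm_ihom_map, ← Category.assoc]
  congr 1
  exact hom_to_ihom_terminal_ext _ _

/-- Functoriality of the based hom object: contravariant in the first variable and
covariant in the second. -/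
noncomputable def basedHomMap {a a' x x' : Under (⊤_ C)} (f : a ⟶ a') (g : x ⟶ x') :
    basedHom a' x ⟶ basedHom a x' :=
  Under.homMk
    (pullback.map ((pre a'.hom).app x.right) (pointLeg (⊤_ C : C) x)
      ((pre a.hom).app x'.right) (pointLeg (⊤_ C : C) x')
      ((ihom a'.right).map g.right ≫ (pre f.right).app x'.right)
      (𝟙 (⊤_ C : C))
      ((ihom (⊤_ C : C)).map g.right)
      (by
        rw [Category.assoc, ← NatTrans.comp_app, ← MonoidalClosed.pre_map, Under.w f]
        exact pre_comm_ihom_map a'.hom g.right)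
      (by
        rw [Category.id_comp]
        dsimp [pointLeg]
        rw [← curry_natural_right, Category.assoc, Under.w g]))
    (by
      dsimp [basedHom]
      apply pullback.hom_ext
      · rw [Category.assoc, pullback.lift_fst, pullback.lift_fst_assoc, ← Category.assoc,
          basedHomPointFst_map, basedHomPointFst_pre, pullback.lift_fst]
      · rw [Category.assoc, pullback.lift_snd, pullback.lift_snd, Category.comp_id,
          pullback.lift_snd])

/-!
A morphism `X ⟶ hom_*(a, x)` is the same as a morphism `a ⊗ X ⟶ x` that is constant at the
basepoint on `t ⊗ X`. Since `- ⊗ X` is a left adjoint, `(a ∧ b) ⊗ X` is again the pushout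
defining the smash product, so morphisms `(a ∧ b) ⊗ X ⟶ c` constant on `t ⊗ X` are the
morphisms `(a ⊗ b) ⊗ X ⟶ c` constant on `(a ⊗ t) ⊗ X` and on `(t ⊗ b) ⊗ X`. After the symmetry
`a ⊗ b ≅ b ⊗ a` these are the morphisms `b ⊗ (a ⊗ X) ⟶ c` that are based in both `a` and `b`,
i.e. the morphisms `X ⟶ hom_*(a, hom_*(b, c))`. Applied to `X = hom_*(a, hom_*(b, c))` and
`X = hom_*(a ∧ b, c)` this gives mutually inverse maps, and all identities between them are
checked after evaluating.
-/

noncomputable def constPt (X : C) (y : Under (⊤_ C)) : X ⟶ y.right :=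
  terminal.from X ≫ y.hom

@[simp]
theorem comp_constPt {X Y : C} (f : X ⟶ Y) (y : Under (⊤_ C)) :
    f ≫ constPt Y y = constPt X y := by
  rw [constPt, ← Category.assoc, terminal.comp_from]; rfl

@[simp]
theorem constPt_comp (X : C) {y y' : Under (⊤_ C)} (g : y ⟶ y') :
    constPt X y ≫ g.right = constPt X y' := by
  rw [constPt, Category.assoc, Under.w g]; rfl

theorem uncurry_comp_pointLeg {X : C} (f : X ⟶ (⊤_ C : C)) (y : Under (⊤_ C)) :
    uncurry (f ≫ pointLeg (⊤_ C : C) y) = constPt _ y := by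
  rw [uncurry_natural_left, pointLeg, uncurry_curry]
  exact comp_constPt _ _

namespace basedHom

noncomputable def fst (a x : Under (⊤_ C)) :
    (basedHom a x).right ⟶ (ihom a.right).obj x.right :=
  pullback.fst _ _

theorem fst_pre (a x : Under (⊤_ C)) :
    fst a x ≫ (pre a.hom).app x.right = terminal.from _ ≫ pointLeg (⊤_ C : C) x :=
  pullback.condition.trans (congrArg (· ≫ _) (terminal.hom_ext _ _))

noncomputable def ev (a x : Under (⊤_ C)) : a.right ⊗ (basedHom a x).right ⟶ x.right :=
  uncurry (fst a x)

theorem uncurry_comp_fst {a x : Under (⊤_ C)} {X : C} (f : X ⟶ (basedHom a x).right) :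
    uncurry (f ≫ fst a x) = a.right ◁ f ≫ ev a x :=
  uncurry_natural_left _ _

theorem hom_ext {a x : Under (⊤_ C)} {X : C} {f g : X ⟶ (basedHom a x).right}
    (h : a.right ◁ f ≫ ev a x = a.right ◁ g ≫ ev a x) : f = g :=
  have hfst : f ≫ fst a x = g ≫ fst a x :=
    uncurry_injective (by rwa [uncurry_comp_fst, uncurry_comp_fst])
  pullback.hom_ext hfst (terminal.hom_ext _ _)

theorem hom_whiskerRight_ev (a x : Under (⊤_ C)) :
    a.hom ▷ _ ≫ ev a x = constPt _ x := by
  rw [ev, ← uncurry_pre_app, fst_pre, uncurry_comp_pointLeg]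

noncomputable def lift {a x : Under (⊤_ C)} {X : C} (u : a.right ⊗ X ⟶ x.right)
    (hu : a.hom ▷ X ≫ u = constPt _ x) : X ⟶ (basedHom a x).right :=
  pullback.lift (curry u) (terminal.from X) (uncurry_injective (by
    rw [uncurry_pre_app, uncurry_curry, hu, uncurry_comp_pointLeg]))

@[simp]
theorem lift_ev {a x : Under (⊤_ C)} {X : C} (u : a.right ⊗ X ⟶ x.right)
    (hu : a.hom ▷ X ≫ u = constPt _ x) : a.right ◁ lift u hu ≫ ev a x = u := by
  have : lift u hu ≫ fst a x = curry u := pullback.lift_fst _ _ _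
  rw [← uncurry_comp_fst, this, uncurry_curry]

theorem whiskerLeft_hom_ev (a x : Under (⊤_ C)) :
    a.right ◁ (basedHom a x).hom ≫ ev a x = constPt _ x := by
  have : (basedHom a x).hom ≫ fst a x = basedHomPointFst a x := pullback.lift_fst _ _ _
  rw [← uncurry_comp_fst, this, basedHomPointFst, ihomTermIso, uncurry_natural_right,
    uncurry_curry]
  rfl

theorem whiskerLeft_constPt_ev (a x : Under (⊤_ C)) (X : C) :
    a.right ◁ constPt X (basedHom a x) ≫ ev a x = constPt _ x := by
  rw [constPt, MonoidalCategory.whiskerLeft_comp, Category.assoc, whiskerLeft_hom_ev,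
    comp_constPt]

theorem constPt_whiskerRight_ev (a x : Under (⊤_ C)) (X : C) :
    constPt X a ▷ _ ≫ ev a x = constPt _ x := by
  rw [constPt, comp_whiskerRight, Category.assoc, hom_whiskerRight_ev, comp_constPt]

theorem whiskerLeft_map_ev {a a' x x' : Under (⊤_ C)} (f : a ⟶ a') (g : x ⟶ x') :
    a.right ◁ (basedHomMap f g).right ≫ ev a x' = f.right ▷ _ ≫ ev a' x ≫ g.right := by
  have : (basedHomMap f g).right ≫ fst a x' =
      fst a' x ≫ (ihom a'.right).map g.right ≫ (pre f.right).app x'.right :=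
    pullback.lift_fst _ _ _
  rw [← uncurry_comp_fst, this, ← Category.assoc, uncurry_pre_app, uncurry_natural_right, ev]

end basedHom

theorem basedHomMap_id (a x : Under (⊤_ C)) : basedHomMap (𝟙 a) (𝟙 x) = 𝟙 _ := by
  ext
  apply basedHom.hom_ext
  simp [basedHom.whiskerLeft_map_ev]

namespace smash

variable (a b : Under (⊤_ C))

noncomputable def inl : a.right ⊗ b.right ⟶ (smash a b).right :=
  pushout.inl _ _

theorem wedgeMap_inl : wedgeMap a b ≫ inl a b = terminal.from _ ≫ (smash a b).hom :=
  pushout.condition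

theorem coprod_inl_wedgeMap :
    (coprod.inl : _ ⟶ wedgeObj a b) ≫ wedgeMap a b = a.right ◁ b.hom :=
  coprod.inl_desc _ _

theorem coprod_inr_wedgeMap :
    (coprod.inr : _ ⟶ wedgeObj a b) ≫ wedgeMap a b = a.hom ▷ b.right :=
  coprod.inr_desc _ _

theorem whiskerLeft_hom_inl : a.right ◁ b.hom ≫ inl a b = constPt _ (smash a b) :=
  (coprod.inl_desc_assoc _ _ _).symm.trans
    ((coprod.inl ≫= wedgeMap_inl a b).trans (comp_constPt _ _))

theorem hom_whiskerRight_inl : a.hom ▷ b.right ≫ inl a b = constPt _ (smash a b) :=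
  (coprod.inr_desc_assoc _ _ _).symm.trans
    ((coprod.inr ≫= wedgeMap_inl a b).trans (comp_constPt _ _))

theorem hom_ext {Z : C} {k l : (smash a b).right ⟶ Z} (hinl : inl a b ≫ k = inl a b ≫ l)
    (hpt : (smash a b).hom ≫ k = (smash a b).hom ≫ l) : k = l :=
  pushout.hom_ext hinl hpt

-- `tensorRight X` is a left adjoint, being isomorphic to `tensorLeft X` via the braiding.
noncomputable def whiskerRightIsColimit (X : C) :
    IsColimit (PushoutCocone.mk (inl a b ▷ X) ((smash a b).hom ▷ X)
      (by rw [← comp_whiskerRight, ← comp_whiskerRight, wedgeMap_inl]) :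
      PushoutCocone (wedgeMap a b ▷ X) (terminal.from (wedgeObj a b) ▷ X)) :=
  isColimitOfHasPushoutOfPreservesColimit (tensorRight X) _ _

variable {a b}

theorem whiskerRight_hom_ext {X Z : C} {k l : (smash a b).right ⊗ X ⟶ Z}
    (hinl : inl a b ▷ X ≫ k = inl a b ▷ X ≫ l)
    (hpt : (smash a b).hom ▷ X ≫ k = (smash a b).hom ▷ X ≫ l) : k = l :=
  PushoutCocone.IsColimit.hom_ext (whiskerRightIsColimit a b X) hinl hpt

theorem wedgeMap_whiskerRight_comp_eq_constPt {X : C} {z : Under (⊤_ C)}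
    {u : (a.right ⊗ b.right) ⊗ X ⟶ z.right} (ha : (a.right ◁ b.hom) ▷ X ≫ u = constPt _ z)
    (hb : (a.hom ▷ b.right) ▷ X ≫ u = constPt _ z) :
    wedgeMap a b ▷ X ≫ u = constPt _ z := by
  refine BinaryCofan.IsColimit.hom_ext
    (isColimitOfHasBinaryCoproductOfPreservesColimit (tensorRight X) _ _) ?_ ?_
  · exact (comp_whiskerRight_assoc _ _ _ _).symm.trans
      ((congrArg (· ▷ X) (coprod_inl_wedgeMap a b) =≫ u).trans
        (ha.trans (comp_constPt _ _).symm))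
  · exact (comp_whiskerRight_assoc _ _ _ _).symm.trans
      ((congrArg (· ▷ X) (coprod_inr_wedgeMap a b) =≫ u).trans
        (hb.trans (comp_constPt _ _).symm))

noncomputable def whiskerRightDesc {X : C} {z : Under (⊤_ C)}
    (u : (a.right ⊗ b.right) ⊗ X ⟶ z.right) (ha : (a.right ◁ b.hom) ▷ X ≫ u = constPt _ z)
    (hb : (a.hom ▷ b.right) ▷ X ≫ u = constPt _ z) : (smash a b).right ⊗ X ⟶ z.right :=
  PushoutCocone.IsColimit.desc (whiskerRightIsColimit a b X) u (constPt _ z)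
    (by rw [wedgeMap_whiskerRight_comp_eq_constPt ha hb, comp_constPt])

@[simp]
theorem inl_whiskerRightDesc {X : C} {z : Under (⊤_ C)}
    (u : (a.right ⊗ b.right) ⊗ X ⟶ z.right) (ha : (a.right ◁ b.hom) ▷ X ≫ u = constPt _ z)
    (hb : (a.hom ▷ b.right) ▷ X ≫ u = constPt _ z) :
    inl a b ▷ X ≫ whiskerRightDesc u ha hb = u :=
  PushoutCocone.IsColimit.inl_desc (whiskerRightIsColimit a b X) _ _ _

@[simp]
theorem hom_whiskerRightDesc {X : C} {z : Under (⊤_ C)}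
    (u : (a.right ⊗ b.right) ⊗ X ⟶ z.right) (ha : (a.right ◁ b.hom) ▷ X ≫ u = constPt _ z)
    (hb : (a.hom ▷ b.right) ▷ X ≫ u = constPt _ z) :
    (smash a b).hom ▷ X ≫ whiskerRightDesc u ha hb = constPt _ z :=
  PushoutCocone.IsColimit.inr_desc (whiskerRightIsColimit a b X) _ _ _

theorem inl_map {a' b' : Under (⊤_ C)} (f : a ⟶ a') (g : b ⟶ b') :
    inl a b ≫ (smashMap f g).right = (f.right ⊗ₘ g.right) ≫ inl a' b' :=
  pushout.inl_desc _ _ _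

end smash

theorem smashMap_id (a b : Under (⊤_ C)) : smashMap (𝟙 a) (𝟙 b) = 𝟙 _ := by
  ext
  apply smash.hom_ext
  · simp [smash.inl_map]
  · simp

section SmashHomAdjunction

open basedHom

variable (a b c : Under (⊤_ C))

noncomputable def ev₂ : (a.right ⊗ b.right) ⊗ (basedHom a (basedHom b c)).right ⟶ c.right :=
  (β_ a.right b.right).hom ▷ _ ≫ (α_ _ _ _).hom ≫ b.right ◁ ev a (basedHom b c) ≫ ev b c

theorem whiskerLeft_ev₂ {X : C} (φ : X ⟶ (basedHom a (basedHom b c)).right) :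
    (a.right ⊗ b.right) ◁ φ ≫ ev₂ a b c =
      (β_ a.right b.right).hom ▷ X ≫ (α_ _ _ _).hom ≫
        b.right ◁ (a.right ◁ φ ≫ ev a (basedHom b c)) ≫ ev b c := by
  rw [ev₂, whisker_exchange_assoc, associator_naturality_right_assoc,
    MonoidalCategory.whiskerLeft_comp_assoc]

theorem whiskerLeft_hom_whiskerRight_ev₂ :
    (a.right ◁ b.hom) ▷ _ ≫ ev₂ a b c = constPt _ c := by
  rw [ev₂, ← comp_whiskerRight_assoc, BraidedCategory.braiding_naturality_right,
    comp_whiskerRight_assoc, associator_naturality_left_assoc, ← whisker_exchange_assoc,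
    hom_whiskerRight_ev, comp_constPt, comp_constPt, comp_constPt]

theorem hom_whiskerRight_whiskerRight_ev₂ :
    (a.hom ▷ b.right) ▷ _ ≫ ev₂ a b c = constPt _ c := by
  rw [ev₂, ← comp_whiskerRight_assoc, BraidedCategory.braiding_naturality_left,
    comp_whiskerRight_assoc, associator_naturality_middle_assoc,
    ← MonoidalCategory.whiskerLeft_comp_assoc, hom_whiskerRight_ev, whiskerLeft_constPt_ev,
    comp_constPt, comp_constPt]

noncomputable def basedUncurry :
    (basedHom a (basedHom b c)).right ⟶ (basedHom (smash a b) c).right :=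
  lift (smash.whiskerRightDesc (ev₂ a b c) (whiskerLeft_hom_whiskerRight_ev₂ a b c)
    (hom_whiskerRight_whiskerRight_ev₂ a b c)) (smash.hom_whiskerRightDesc _ _ _)

theorem inl_whiskerRight_basedUncurry_ev :
    smash.inl a b ▷ _ ≫ (smash a b).right ◁ basedUncurry a b c ≫ ev (smash a b) c =
      ev₂ a b c := by
  rw [basedUncurry, lift_ev, smash.inl_whiskerRightDesc]

theorem hom_whiskerRight_basedUncurry_ev :
    (smash a b).hom ▷ _ ≫ (smash a b).right ◁ basedUncurry a b c ≫ ev (smash a b) c =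
      constPt _ c := by
  rw [basedUncurry, lift_ev, smash.hom_whiskerRightDesc]

noncomputable def evThroughSmash :
    b.right ⊗ (a.right ⊗ (basedHom (smash a b) c).right) ⟶ c.right :=
  (α_ _ _ _).inv ≫ (β_ b.right a.right).hom ▷ _ ≫ smash.inl a b ▷ _ ≫ ev (smash a b) c

theorem hom_whiskerRight_evThroughSmash :
    b.hom ▷ _ ≫ evThroughSmash a b c = constPt _ c := by
  rw [evThroughSmash, associator_inv_naturality_left_assoc, ← comp_whiskerRight_assoc,
    BraidedCategory.braiding_naturality_left, ← comp_whiskerRight_assoc, Category.assoc,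
    smash.whiskerLeft_hom_inl, comp_constPt, constPt_whiskerRight_ev, comp_constPt]

noncomputable def partialEv :
    a.right ⊗ (basedHom (smash a b) c).right ⟶ (basedHom b c).right :=
  lift (evThroughSmash a b c) (hom_whiskerRight_evThroughSmash a b c)

theorem hom_whiskerRight_partialEv : a.hom ▷ _ ≫ partialEv a b c = constPt _ _ := by
  apply basedHom.hom_ext
  rw [MonoidalCategory.whiskerLeft_comp_assoc, partialEv, lift_ev, whiskerLeft_constPt_ev,
    evThroughSmash, associator_inv_naturality_middle_assoc, ← comp_whiskerRight_assoc,
    BraidedCategory.braiding_naturality_right, ← comp_whiskerRight_assoc, Category.assoc,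
    smash.hom_whiskerRight_inl, comp_constPt, constPt_whiskerRight_ev, comp_constPt]

noncomputable def basedCurry :
    (basedHom (smash a b) c).right ⟶ (basedHom a (basedHom b c)).right :=
  lift (partialEv a b c) (hom_whiskerRight_partialEv a b c)

theorem basedUncurry_basedCurry : basedUncurry a b c ≫ basedCurry a b c = 𝟙 _ := by
  apply basedHom.hom_ext
  rw [MonoidalCategory.whiskerLeft_comp_assoc, basedCurry, lift_ev]
  apply basedHom.hom_ext
  rw [partialEv, MonoidalCategory.whiskerLeft_comp_assoc, lift_ev, evThroughSmash,
    associator_inv_naturality_right_assoc, whisker_exchange_assoc,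
    whisker_exchange_assoc (smash.inl a b), inl_whiskerRight_basedUncurry_ev, ev₂,
    ← comp_whiskerRight_assoc, SymmetricCategory.symmetry, id_whiskerRight, Category.id_comp,
    Iso.inv_hom_id_assoc, MonoidalCategory.whiskerLeft_id, Category.id_comp]

theorem basedCurry_basedUncurry : basedCurry a b c ≫ basedUncurry a b c = 𝟙 _ := by
  apply basedHom.hom_ext
  apply smash.whiskerRight_hom_ext
  · rw [MonoidalCategory.whiskerLeft_comp_assoc, ← whisker_exchange_assoc,
      inl_whiskerRight_basedUncurry_ev, whiskerLeft_ev₂, basedCurry, lift_ev, partialEv,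
      lift_ev, evThroughSmash, Iso.hom_inv_id_assoc, ← comp_whiskerRight_assoc,
      SymmetricCategory.symmetry, id_whiskerRight, Category.id_comp, MonoidalCategory.whiskerLeft_id, Category.id_comp]
  · rw [MonoidalCategory.whiskerLeft_comp_assoc, ← whisker_exchange_assoc,
      hom_whiskerRight_basedUncurry_ev, comp_constPt, MonoidalCategory.whiskerLeft_id,
      Category.id_comp, hom_whiskerRight_ev]

theorem hom_basedUncurry :
    (basedHom a (basedHom b c)).hom ≫ basedUncurry a b c = (basedHom (smash a b) c).hom := by
  apply basedHom.hom_ext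
  rw [whiskerLeft_hom_ev]
  apply smash.whiskerRight_hom_ext
  · rw [MonoidalCategory.whiskerLeft_comp_assoc, ← whisker_exchange_assoc,
      inl_whiskerRight_basedUncurry_ev, whiskerLeft_ev₂, whiskerLeft_hom_ev,
      whiskerLeft_constPt_ev, comp_constPt, comp_constPt, comp_constPt]
  · rw [MonoidalCategory.whiskerLeft_comp_assoc, ← whisker_exchange_assoc,
      hom_whiskerRight_basedUncurry_ev, comp_constPt, comp_constPt]

theorem ev₂_natural {a a' b b' c c' : Under (⊤_ C)} (f : a ⟶ a') (g : b ⟶ b') (h : c ⟶ c') :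
    (a.right ⊗ b.right) ◁ (basedHomMap f (basedHomMap g h)).right ≫ ev₂ a b c' =
      (f.right ⊗ₘ g.right) ▷ _ ≫ ev₂ a' b' c ≫ h.right := by
  rw [whiskerLeft_ev₂, whiskerLeft_map_ev]
  simp only [MonoidalCategory.whiskerLeft_comp, Category.assoc, whiskerLeft_map_ev]
  rw [whisker_exchange_assoc, ev₂]
  simp only [Category.assoc]
  rw [← comp_whiskerRight_assoc, BraidedCategory.braiding_naturality, tensorHom_def',
    comp_whiskerRight, comp_whiskerRight, Category.assoc, Category.assoc,
    associator_naturality_left_assoc, associator_naturality_middle_assoc]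

theorem basedUncurry_natural {a a' b b' c c' : Under (⊤_ C)} (f : a ⟶ a') (g : b ⟶ b')
    (h : c ⟶ c') :
    (basedHomMap f (basedHomMap g h)).right ≫ basedUncurry a b c' =
      basedUncurry a' b' c ≫ (basedHomMap (smashMap f g) h).right := by
  apply basedHom.hom_ext
  apply smash.whiskerRight_hom_ext
  · rw [MonoidalCategory.whiskerLeft_comp_assoc, ← whisker_exchange_assoc,
      inl_whiskerRight_basedUncurry_ev, ev₂_natural, MonoidalCategory.whiskerLeft_comp_assoc,
      whiskerLeft_map_ev, whisker_exchange_assoc, ← comp_whiskerRight_assoc, smash.inl_map,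
      comp_whiskerRight_assoc, reassoc_of% inl_whiskerRight_basedUncurry_ev]
  · rw [MonoidalCategory.whiskerLeft_comp_assoc, ← whisker_exchange_assoc,
      hom_whiskerRight_basedUncurry_ev, comp_constPt, MonoidalCategory.whiskerLeft_comp_assoc,
      whiskerLeft_map_ev, whisker_exchange_assoc, ← comp_whiskerRight_assoc, Under.w,
      reassoc_of% hom_whiskerRight_basedUncurry_ev, constPt_comp]

noncomputable def basedHomSmashIso : basedHom a (basedHom b c) ≅ basedHom (smash a b) c :=
  Under.isoMk ⟨basedUncurry a b c, basedCurry a b c, basedUncurry_basedCurry a b c,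
    basedCurry_basedUncurry a b c⟩ (hom_basedUncurry a b c)

end SmashHomAdjunction

/-- For pointed objects `a`, `b`, `c` there is an isomorphism
`hom_*(a, hom_*(b, c)) ≅ hom_*(a ∧ b, c)` of pointed objects (hence compatible with the
basepoint morphisms from `t`), natural in `a`, `b` and `c`. -/
theorem basedHom_smash_iso :
    ∃ e : ∀ a b c : Under (⊤_ C), basedHom a (basedHom b c) ≅ basedHom (smash a b) c,
      (∀ (a a' b c : Under (⊤_ C)) (f : a ⟶ a'),
        basedHomMap f (𝟙 (basedHom b c)) ≫ (e a b c).hom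
          = (e a' b c).hom ≫ basedHomMap (smashMap f (𝟙 b)) (𝟙 c)) ∧
      (∀ (a b b' c : Under (⊤_ C)) (g : b ⟶ b'),
        basedHomMap (𝟙 a) (basedHomMap g (𝟙 c)) ≫ (e a b c).hom
          = (e a b' c).hom ≫ basedHomMap (smashMap (𝟙 a) g) (𝟙 c)) ∧
      (∀ (a b c c' : Under (⊤_ C)) (h : c ⟶ c'),
        basedHomMap (𝟙 a) (basedHomMap (𝟙 b) h) ≫ (e a b c').hom
          = (e a b c).hom ≫ basedHomMap (𝟙 (smash a b)) h) := by
  refine ⟨basedHomSmashIso, fun a a' b c f => ?_, fun a b b' c g => ?_, fun a b c c' h => ?_⟩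
  · ext
    simpa [basedHomSmashIso, basedHomMap_id] using basedUncurry_natural f (𝟙 b) (𝟙 c)
  · ext
    simpa [basedHomSmashIso] using basedUncurry_natural (𝟙 a) g (𝟙 c)
  · ext
    simpa [basedHomSmashIso, smashMap_id] using basedUncurry_natural (𝟙 a) (𝟙 b) h

end BasedObjects
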